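/- Let A, X, Y be jointly distributed random variables with finite ranges satisfying condition (C): for all a, a', x, y, if p(a,x), p(a,y), p(a',x), p(a',y) are all positive then a = a'. Then H(A | X) + H(A | Y) ≤ H(A). -/

import Mathlib

open Finset

noncomputable section

/-- Probability of an event under a distribution on a finite sample space. -/
def pr {Ω : Type*} [Fintype Ω] (p : Ω → ℝ) (E : Set Ω) : ℝ :=
  ∑ ω, E.indicator p ω

/-- `p` is a probability mass function on the finite sample space `Ω`. -/
def IsPMF {Ω : Type*} [Fintype Ω] (p : Ω → ℝ) : Prop :=
  (∀ ω, 0 ≤ p ω) ∧ ∑ ω, p ω = 1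

/-- Shannon entropy (base 2) of a random variable `V` on a finite sample space. -/
def ent {Ω β : Type*} [Fintype Ω] [Fintype β] (p : Ω → ℝ) (V : Ω → β) : ℝ :=
  -∑ v, pr p {ω | V ω = v} * Real.logb 2 (pr p {ω | V ω = v})

/-- Conditional Shannon entropy (base 2): `H(V | W)`. -/
def condEnt {Ω β γ : Type*} [Fintype Ω] [Fintype β] [Fintype γ]
    (p : Ω → ℝ) (V : Ω → β) (W : Ω → γ) : ℝ :=
  ent p (fun ω => (V ω, W ω)) - ent p W

/-- Mutual information (base 2): `I(V : W)`. -/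
def mi {Ω β γ : Type*} [Fintype Ω] [Fintype β] [Fintype γ]
    (p : Ω → ℝ) (V : Ω → β) (W : Ω → γ) : ℝ :=
  ent p V + ent p W - ent p (fun ω => (V ω, W ω))

/-- Conditional mutual information (base 2): `I(V : W | U)`. -/
def cmi {Ω β γ δ : Type*} [Fintype Ω] [Fintype β] [Fintype γ] [Fintype δ]
    (p : Ω → ℝ) (V : Ω → β) (W : Ω → γ) (U : Ω → δ) : ℝ :=
  ent p (fun ω => (V ω, U ω)) + ent p (fun ω => (W ω, U ω))
    - ent p (fun ω => (V ω, W ω, U ω)) - ent p U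

end

/-!
Let `μ` be the law of `(A, X, Y)` with the given laws of `(A, X)` and `(A, Y)` under which `X` and
`Y` are conditionally independent given `A`. Condition (C) says exactly that `A` is a function of
`(X, Y)` on the support of `μ`, so `H(A,X) + H(A,Y) - H(A) = H_μ(A,X,Y) = H_μ(X,Y) ≤ H(X) + H(Y)`,
which rearranges to the claim. Concretely, `H(X) + H(Y) - H(A,X) - H(A,Y) + H(A)` is
`∑ μ log (μ / (P_X ⊗ P_Y))`, and it is nonnegative by Gibbs' inequality because the support of `μ`
injects into that of `P_X ⊗ P_Y`.
-/

open Real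

section Probability

variable {Ω β : Type*} [Fintype Ω] [Fintype β]

lemma pr_nonneg {p : Ω → ℝ} (hp : ∀ ω, 0 ≤ p ω) (E : Set Ω) : 0 ≤ pr p E :=
  sum_nonneg fun ω _ => Set.indicator_nonneg (fun ω _ => hp ω) ω

lemma sum_pr_inter_fiber (p : Ω → ℝ) (E : Set Ω) (V : Ω → β) :
    ∑ v, pr p (E ∩ {ω | V ω = v}) = pr p E := by
  classical
  unfold pr
  rw [sum_comm]
  refine sum_congr rfl fun ω _ => ?_
  simp only [Set.indicator_apply, Set.mem_inter_iff]
  by_cases hω : ω ∈ E <;> simp [hω]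

lemma sum_pr_fiber_inter (p : Ω → ℝ) (E : Set Ω) (V : Ω → β) :
    ∑ v, pr p ({ω | V ω = v} ∩ E) = pr p E := by
  simp only [Set.inter_comm _ E, sum_pr_inter_fiber]

lemma sum_pr_fiber {p : Ω → ℝ} (hp : ∑ ω, p ω = 1) (V : Ω → β) :
    ∑ v, pr p {ω | V ω = v} = 1 := by
  simpa [pr, hp] using sum_pr_inter_fiber p Set.univ V

lemma ent_eq_neg_sum_mul_log (p : Ω → ℝ) (V : Ω → β) :
    ent p V = -(∑ v, pr p {ω | V ω = v} * log (pr p {ω | V ω = v})) / log 2 := by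
  simp only [ent, logb, neg_div, sum_div, mul_div_assoc]

lemma ent_pair_eq_neg_sum_mul_log {γ : Type*} [Fintype γ] (p : Ω → ℝ) (V : Ω → β) (W : Ω → γ) :
    ent p (fun ω => (V ω, W ω)) = -(∑ v, ∑ w, pr p {ω | V ω = v ∧ W ω = w} *
      log (pr p {ω | V ω = v ∧ W ω = w})) / log 2 := by
  simp only [ent_eq_neg_sum_mul_log, Fintype.sum_prod_type, Prod.mk.injEq]

end Probability

lemma sub_le_mul_log_div {u v : ℝ} (hu : 0 ≤ u) (hv : 0 < v) : u - v ≤ u * log (u / v) := by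
  have h := mul_le_mul_of_nonneg_left (self_sub_one_le_mul_log (div_nonneg hu hv.le)) hv.le
  rwa [mul_sub, mul_one, ← mul_assoc, mul_div_cancel₀ _ hv.ne'] at h

lemma sum_mul_log_div_nonneg {ι : Type*} [Fintype ι] {μ ν : ι → ℝ} (hμ : ∀ i, 0 ≤ μ i)
    (hμ1 : ∑ i, μ i = 1) (hν : ∀ i, μ i ≠ 0 → 0 < ν i) (hν1 : ∑ i with μ i ≠ 0, ν i ≤ 1) :
    0 ≤ ∑ i, μ i * log (μ i / ν i) := by
  classical
  have hsupp : ∀ φ : ι → ℝ, (∀ i, μ i = 0 → φ i = 0) → ∑ i with μ i ≠ 0, φ i = ∑ i, φ i :=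
    fun φ hφ => sum_filter_of_ne fun i _ hi h0 => hi (hφ i h0)
  calc 0 ≤ ∑ i with μ i ≠ 0, μ i - ∑ i with μ i ≠ 0, ν i := by
        rw [hsupp μ fun _ h => h, hμ1]; linarith
    _ = ∑ i with μ i ≠ 0, (μ i - ν i) := (sum_sub_distrib ..).symm
    _ ≤ ∑ i with μ i ≠ 0, μ i * log (μ i / ν i) :=
        sum_le_sum fun i hi => sub_le_mul_log_div (hμ i) (hν i (mem_filter.1 hi).2)
    _ = ∑ i, μ i * log (μ i / ν i) := hsupp _ fun i h => by simp [h]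

lemma sum_mul_div_of_sum_eq {ι : Type*} [Fintype ι] {c d : ℝ} {φ : ι → ℝ}
    (hφ : ∑ i, φ i = d) (hcd : d = 0 → c = 0) : ∑ i, c * φ i / d = c := by
  rw [← sum_div, ← mul_sum, hφ]
  rcases eq_or_ne d 0 with hd | hd
  · simp [hd, hcd hd]
  · exact mul_div_cancel_right₀ c hd

section Coupling

variable {α χ υ : Type*} {F : α → χ → ℝ} {G : α → υ → ℝ} {f : α → ℝ} {g : χ → ℝ} {h : υ → ℝ}

/-- `P(A = a) P(X = x | A = a) P(Y = y | A = a)`; where `f a = 0` the junk value `/ 0 = 0` is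
the right one, since then `F a x = 0`. -/
noncomputable def condIndepCoupling (F : α → χ → ℝ) (G : α → υ → ℝ) (f : α → ℝ)
    (t : α × χ × υ) : ℝ :=
  F t.1 t.2.1 * G t.1 t.2.2 / f t.1

lemma condIndepCoupling_nonneg (hF : ∀ a x, 0 ≤ F a x) (hG : ∀ a y, 0 ≤ G a y)
    (hf : ∀ a, 0 ≤ f a) (t : α × χ × υ) : 0 ≤ condIndepCoupling F G f t :=
  div_nonneg (mul_nonneg (hF _ _) (hG _ _)) (hf _)

lemma ne_zero_of_condIndepCoupling_ne_zero {t : α × χ × υ} (ht : condIndepCoupling F G f t ≠ 0) :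
    F t.1 t.2.1 ≠ 0 ∧ G t.1 t.2.2 ≠ 0 ∧ f t.1 ≠ 0 := by
  simpa only [condIndepCoupling, div_ne_zero_iff, mul_ne_zero_iff, and_assoc] using ht

variable [Fintype α]

lemma marginals_pos_of_condIndepCoupling_ne_zero (hF : ∀ a x, 0 ≤ F a x) (hG : ∀ a y, 0 ≤ G a y)
    (hFg : ∀ x, ∑ a, F a x = g x) (hGh : ∀ y, ∑ a, G a y = h y) {t : α × χ × υ}
    (ht : condIndepCoupling F G f t ≠ 0) : 0 < g t.2.1 ∧ 0 < h t.2.2 := by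
  obtain ⟨hFt, hGt, -⟩ := ne_zero_of_condIndepCoupling_ne_zero ht
  exact ⟨hFg t.2.1 ▸ sum_pos' (fun a _ => hF a _) ⟨t.1, mem_univ _, (hF _ _).lt_of_ne' hFt⟩,
    hGh t.2.2 ▸ sum_pos' (fun a _ => hG a _) ⟨t.1, mem_univ _, (hG _ _).lt_of_ne' hGt⟩⟩

variable [Fintype χ] [Fintype υ]

lemma sum_condIndepCoupling_mul_left (hF : ∀ a x, 0 ≤ F a x) (hFf : ∀ a, ∑ x, F a x = f a)
    (hGf : ∀ a, ∑ y, G a y = f a) (φ : α → χ → ℝ) :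
    ∑ t, condIndepCoupling F G f t * φ t.1 t.2.1 = ∑ a, ∑ x, F a x * φ a x := by
  simp only [Fintype.sum_prod_type, condIndepCoupling, ← sum_mul]
  refine sum_congr rfl fun a _ => sum_congr rfl fun x _ => ?_
  rw [sum_mul_div_of_sum_eq (hGf a) fun h0 =>
    congrFun ((Fintype.sum_eq_zero_iff_of_nonneg (hF a)).1 ((hFf a).trans h0)) x]

lemma sum_condIndepCoupling_mul_right (hG : ∀ a y, 0 ≤ G a y) (hFf : ∀ a, ∑ x, F a x = f a)
    (hGf : ∀ a, ∑ y, G a y = f a) (ψ : α → υ → ℝ) :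
    ∑ t, condIndepCoupling F G f t * ψ t.1 t.2.2 = ∑ a, ∑ y, G a y * ψ a y := by
  simp only [Fintype.sum_prod_type, condIndepCoupling]
  refine sum_congr rfl fun a _ => ?_
  rw [sum_comm]
  simp only [← sum_mul, mul_comm (F a _)]
  refine sum_congr rfl fun y _ => ?_
  rw [sum_mul_div_of_sum_eq (hFf a) fun h0 =>
    congrFun ((Fintype.sum_eq_zero_iff_of_nonneg (hG a)).1 ((hGf a).trans h0)) y]

lemma sum_condIndepCoupling_mul_log_div (hF : ∀ a x, 0 ≤ F a x) (hG : ∀ a y, 0 ≤ G a y)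
    (hFf : ∀ a, ∑ x, F a x = f a) (hGf : ∀ a, ∑ y, G a y = f a)
    (hFg : ∀ x, ∑ a, F a x = g x) (hGh : ∀ y, ∑ a, G a y = h y) :
    ∑ t, condIndepCoupling F G f t * log (condIndepCoupling F G f t / (g t.2.1 * h t.2.2)) =
      ∑ a, ∑ x, F a x * log (F a x) + ∑ a, ∑ y, G a y * log (G a y) - ∑ a, f a * log (f a)
        - ∑ x, g x * log (g x) - ∑ y, h y * log (h y) := by
  set μ := condIndepCoupling F G f
  have hlog : ∀ t, μ t * log (μ t / (g t.2.1 * h t.2.2)) = μ t * log (F t.1 t.2.1)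
      + μ t * log (G t.1 t.2.2) - μ t * log (f t.1) - μ t * log (g t.2.1)
      - μ t * log (h t.2.2) := by
    intro t
    rcases eq_or_ne (μ t) 0 with h0 | h0
    · simp [h0]
    obtain ⟨hFt, hGt, hft⟩ := ne_zero_of_condIndepCoupling_ne_zero h0
    obtain ⟨hgt, hht⟩ := marginals_pos_of_condIndepCoupling_ne_zero hF hG hFg hGh h0
    rw [show μ t = F t.1 t.2.1 * G t.1 t.2.2 / f t.1 from rfl,
      log_div (div_ne_zero (mul_ne_zero hFt hGt) hft) (mul_ne_zero hgt.ne' hht.ne'),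
      log_div (mul_ne_zero hFt hGt) hft, log_mul hFt hGt, log_mul hgt.ne' hht.ne']
    ring
  have eF : ∑ t, μ t * log (F t.1 t.2.1) = ∑ a, ∑ x, F a x * log (F a x) :=
    sum_condIndepCoupling_mul_left hF hFf hGf fun a x => log (F a x)
  have eG : ∑ t, μ t * log (G t.1 t.2.2) = ∑ a, ∑ y, G a y * log (G a y) :=
    sum_condIndepCoupling_mul_right hG hFf hGf fun a y => log (G a y)
  have ef : ∑ t, μ t * log (f t.1) = ∑ a, f a * log (f a) := by
    rw [sum_condIndepCoupling_mul_left hF hFf hGf fun a _ => log (f a)]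
    simp only [← sum_mul, hFf]
  have eg : ∑ t, μ t * log (g t.2.1) = ∑ x, g x * log (g x) := by
    rw [sum_condIndepCoupling_mul_left hF hFf hGf fun _ x => log (g x), sum_comm]
    simp only [← sum_mul, hFg]
  have eh : ∑ t, μ t * log (h t.2.2) = ∑ y, h y * log (h y) := by
    rw [sum_condIndepCoupling_mul_right hG hFf hGf fun _ y => log (h y), sum_comm]
    simp only [← sum_mul, hGh]
  simp only [hlog, sum_sub_distrib, sum_add_distrib, eF, eG, ef, eg, eh]

lemma sum_support_condIndepCoupling_le_one (hF : ∀ a x, 0 ≤ F a x) (hG : ∀ a y, 0 ≤ G a y)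
    (hFg : ∀ x, ∑ a, F a x = g x) (hGh : ∀ y, ∑ a, G a y = h y)
    (hg1 : ∑ x, g x = 1) (hh1 : ∑ y, h y = 1)
    (hC : ∀ a a' x y, 0 < F a x → 0 < G a y → 0 < F a' x → 0 < G a' y → a = a') :
    ∑ t with condIndepCoupling F G f t ≠ 0, g t.2.1 * h t.2.2 ≤ 1 := by
  classical
  have hpos : ∀ {t}, condIndepCoupling F G f t ≠ 0 → 0 < F t.1 t.2.1 ∧ 0 < G t.1 t.2.2 :=
    fun ht => have ⟨hFt, hGt, _⟩ := ne_zero_of_condIndepCoupling_ne_zero ht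
      ⟨(hF _ _).lt_of_ne' hFt, (hG _ _).lt_of_ne' hGt⟩
  set S := univ.filter fun t => condIndepCoupling F G f t ≠ 0
  have hinj : Set.InjOn Prod.snd (S : Set (α × χ × υ)) := by
    rintro ⟨a, xy⟩ ht ⟨a', xy'⟩ ht' (rfl : xy = xy')
    obtain ⟨hFa, hGa⟩ := hpos (mem_filter.1 ht).2
    obtain ⟨hFa', hGa'⟩ := hpos (mem_filter.1 ht').2
    rw [hC a a' xy.1 xy.2 hFa hGa hFa' hGa']
  have hg : ∀ x, 0 ≤ g x := fun x => hFg x ▸ sum_nonneg fun a _ => hF a x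
  have hh : ∀ y, 0 ≤ h y := fun y => hGh y ▸ sum_nonneg fun a _ => hG a y
  calc ∑ t ∈ S, g t.2.1 * h t.2.2
      = ∑ z ∈ S.image Prod.snd, g z.1 * h z.2 :=
        (sum_image (f := fun z => g z.1 * h z.2) hinj).symm
    _ ≤ ∑ z : χ × υ, g z.1 * h z.2 :=
        sum_le_univ_sum_of_nonneg fun z => mul_nonneg (hg z.1) (hh z.2)
    _ = 1 := by rw [Fintype.sum_prod_type, ← sum_mul_sum, hg1, hh1, one_mul]

theorem sum_mul_log_marginals_le (hF : ∀ a x, 0 ≤ F a x) (hG : ∀ a y, 0 ≤ G a y)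
    (hFf : ∀ a, ∑ x, F a x = f a) (hGf : ∀ a, ∑ y, G a y = f a)
    (hFg : ∀ x, ∑ a, F a x = g x) (hGh : ∀ y, ∑ a, G a y = h y) (hf1 : ∑ a, f a = 1)
    (hC : ∀ a a' x y, 0 < F a x → 0 < G a y → 0 < F a' x → 0 < G a' y → a = a') :
    ∑ a, f a * log (f a) + ∑ x, g x * log (g x) + ∑ y, h y * log (h y) ≤
      ∑ a, ∑ x, F a x * log (F a x) + ∑ a, ∑ y, G a y * log (G a y) := by
  have hg1 : ∑ x, g x = 1 := by simp only [← hFg]; rw [sum_comm]; simp only [hFf, hf1]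
  have hh1 : ∑ y, h y = 1 := by simp only [← hGh]; rw [sum_comm]; simp only [hGf, hf1]
  have hμ1 : ∑ t, condIndepCoupling F G f t = 1 := by
    simpa [hFf, hf1] using sum_condIndepCoupling_mul_left hF hFf hGf fun _ _ => 1
  have hf : ∀ a, 0 ≤ f a := fun a => hFf a ▸ sum_nonneg fun x _ => hF a x
  have hgibbs := sum_mul_log_div_nonneg (condIndepCoupling_nonneg hF hG hf) hμ1
    (fun t ht => have ⟨hgt, hht⟩ := marginals_pos_of_condIndepCoupling_ne_zero hF hG hFg hGh ht
      mul_pos hgt hht)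
    (sum_support_condIndepCoupling_le_one hF hG hFg hGh hg1 hh1 hC)
  rw [sum_condIndepCoupling_mul_log_div hF hG hFf hGf hFg hGh] at hgibbs
  linarith

end Coupling

/-- Condition (C) implies `H(A|X) + H(A|Y) ≤ H(A)`. -/
theorem stmt_7 {Ω α χ υ : Type*} [Fintype Ω] [Fintype α] [Fintype χ] [Fintype υ]
    (p : Ω → ℝ) (hp : IsPMF p) (A : Ω → α) (X : Ω → χ) (Y : Ω → υ)
    (hC : ∀ (a a' : α) (x : χ) (y : υ),
      0 < pr p {ω | A ω = a ∧ X ω = x} →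
      0 < pr p {ω | A ω = a ∧ Y ω = y} →
      0 < pr p {ω | A ω = a' ∧ X ω = x} →
      0 < pr p {ω | A ω = a' ∧ Y ω = y} → a = a') :
    condEnt p A X + condEnt p A Y ≤ ent p A := by
  obtain ⟨hp0, hp1⟩ := hp
  have key := sum_mul_log_marginals_le (F := fun a x => pr p {ω | A ω = a ∧ X ω = x})
    (G := fun a y => pr p {ω | A ω = a ∧ Y ω = y})
    (fun _ _ => pr_nonneg hp0 _) (fun _ _ => pr_nonneg hp0 _)
    (fun a => sum_pr_inter_fiber p {ω | A ω = a} X)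
    (fun a => sum_pr_inter_fiber p {ω | A ω = a} Y)
    (fun x => sum_pr_fiber_inter p {ω | X ω = x} A)
    (fun y => sum_pr_fiber_inter p {ω | Y ω = y} A)
    (sum_pr_fiber hp1 A) hC
  rw [condEnt, condEnt, ent_pair_eq_neg_sum_mul_log, ent_pair_eq_neg_sum_mul_log,
    ent_eq_neg_sum_mul_log, ent_eq_neg_sum_mul_log, ent_eq_neg_sum_mul_log, div_sub_div_same,
    div_sub_div_same, ← add_div, div_le_div_iff_of_pos_right (log_pos one_lt_two)]
  linarith
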